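/- If an m-linear form U on (ℝⁿ)^m is composed of exactly k nonzero monomials and achieves (∑_{j₁,…,j_{m−1}}(∑_{j_m}|U(e_{j₁},…,e_{j_m})|)²)^{1/2} = (√2)^{m−1}‖U‖ with U ≠ 0, then k ≥ 2^{m−1}. -/

import Mathlib

/-!
Averaging `U` over the sign vectors `(±1, …, ±1)`, whose monomials `∏ₛ εₛ(jₛ)` are orthogonal,
shows that the squared coefficients of `U` sum to at most `‖U‖²`. Each inner `ℓ₁`-sum has at most
`k` nonzero terms, so by Cauchy–Schwarz its square is at most `k` times the corresponding sum of
squares; hence the mixed sum of squares, which is `2^m ‖U‖²` by assumption, is at most `k ‖U‖²`.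
-/

/-- Standard basis vector of `ℓ∞ⁿ`. -/
noncomputable def stdBasis (n : ℕ) (i : Fin n) : PiLp ⊤ (fun _ : Fin n => ℝ) :=
  (WithLp.equiv ⊤ (∀ _ : Fin n, ℝ)).symm (Pi.single i 1)

open Finset

noncomputable def boolSign (b : Bool) : ℝ := if b then 1 else -1

lemma boolSign_mul_self (b : Bool) : boolSign b * boolSign b = 1 := by
  cases b <;> norm_num [boolSign]

lemma sum_boolSign_mul_boolSign_of_ne {α : Type*} [Fintype α] [DecidableEq α] {a b : α}
    (hab : a ≠ b) : ∑ e : α → Bool, boolSign (e a) * boolSign (e b) = 0 := by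
  -- the summand factors over the coordinates of `e`, and the factor at `a` averages to zero
  have hprod : ∀ e : α → Bool, boolSign (e a) * boolSign (e b) =
      ∏ i, (if i = a then boolSign (e i) else 1) * (if i = b then boolSign (e i) else 1) := by
    intro e
    rw [prod_mul_distrib, prod_ite_eq', prod_ite_eq']
    simp
  simp_rw [hprod]
  rw [← Fintype.prod_sum fun i x =>
    (if i = a then boolSign x else 1) * (if i = b then boolSign x else 1)]
  exact prod_eq_zero (mem_univ a) (by simp [hab, boolSign])

lemma sum_prod_boolSign_mul_prod_boolSign_of_ne {ι α : Type*} [Fintype ι] [DecidableEq ι]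
    [Fintype α] [DecidableEq α] {j j' : ι → α} (hj : j ≠ j') :
    ∑ ε : ι → α → Bool, (∏ s, boolSign (ε s (j s))) * ∏ s, boolSign (ε s (j' s)) = 0 := by
  obtain ⟨s, hs⟩ := Function.ne_iff.mp hj
  simp_rw [← prod_mul_distrib]
  rw [← Fintype.prod_sum fun s (e : α → Bool) => boolSign (e (j s)) * boolSign (e (j' s))]
  exact prod_eq_zero (mem_univ s) (sum_boolSign_mul_boolSign_of_ne hs)

lemma sum_sq_sum_mul_of_orthogonal {E J : Type*} [Fintype E] [Fintype J] (c : E → J → ℝ)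
    (N : ℝ) (hnorm : ∀ j, ∑ ε, c ε j ^ 2 = N)
    (horth : ∀ j j', j ≠ j' → ∑ ε, c ε j * c ε j' = 0) (a : J → ℝ) :
    ∑ ε, (∑ j, c ε j * a j) ^ 2 = N * ∑ j, a j ^ 2 := by
  calc ∑ ε, (∑ j, c ε j * a j) ^ 2
      = ∑ j, ∑ j', (∑ ε, c ε j * c ε j') * (a j * a j') := by
        simp_rw [sq, sum_mul_sum, sum_mul]
        rw [sum_comm]
        refine sum_congr rfl fun j _ => ?_
        rw [sum_comm]
        exact sum_congr rfl fun _ _ => sum_congr rfl fun _ _ => by ring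
    _ = ∑ j, N * a j ^ 2 := by
        refine sum_congr rfl fun j _ => ?_
        rw [sum_eq_single j (fun j' _ h => by rw [horth j j' h.symm, zero_mul]) (by simp),
          ← hnorm j]
        simp_rw [sq]
    _ = N * ∑ j, a j ^ 2 := (mul_sum ..).symm

noncomputable def signVec (n : ℕ) (e : Fin n → Bool) : PiLp ⊤ (fun _ : Fin n => ℝ) :=
  WithLp.toLp ⊤ fun i => boolSign (e i)

lemma norm_signVec_le_one (n : ℕ) (e : Fin n → Bool) : ‖signVec n e‖ ≤ 1 := by
  refine (PiLp.norm_eq_ciSup _).trans_le (Real.iSup_le (fun i => ?_) zero_le_one)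
  cases h : e i <;> norm_num [signVec, boolSign, h]

lemma signVec_eq_sum (n : ℕ) (e : Fin n → Bool) :
    signVec n e = ∑ i, boolSign (e i) • stdBasis n i := by
  ext t
  simp [signVec, stdBasis, Pi.single_apply]

section MultilinearForm

variable {ι : Type*} [Fintype ι] {n : ℕ}
  (U : ContinuousMultilinearMap ℝ (fun _ : ι => PiLp ⊤ fun _ : Fin n => ℝ) ℝ)

lemma abs_apply_signVec_le_opNorm (ε : ι → Fin n → Bool) :
    |U (fun s => signVec n (ε s))| ≤ ‖U‖ :=
  calc |U (fun s => signVec n (ε s))| ≤ ‖U‖ * ∏ s, ‖signVec n (ε s)‖ := U.le_opNorm _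
    _ ≤ ‖U‖ * 1 := by
        gcongr
        exact prod_le_one (fun _ _ => norm_nonneg _) fun s _ => norm_signVec_le_one n (ε s)
    _ = ‖U‖ := mul_one _

variable [DecidableEq ι]

lemma apply_signVec (ε : ι → Fin n → Bool) :
    U (fun s => signVec n (ε s)) =
      ∑ j : ι → Fin n, (∏ s, boolSign (ε s (j s))) * U (fun s => stdBasis n (j s)) := by
  simp_rw [signVec_eq_sum, U.map_sum, U.map_smul_univ, smul_eq_mul]

theorem sum_sq_apply_stdBasis_le_opNorm_sq :
    ∑ j : ι → Fin n, U (fun s => stdBasis n (j s)) ^ 2 ≤ ‖U‖ ^ 2 := by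
  set N : ℝ := (Fintype.card (ι → Fin n → Bool) : ℝ)
  have hN : 0 < N := by positivity
  have hparseval := sum_sq_sum_mul_of_orthogonal
    (fun (ε : ι → Fin n → Bool) (j : ι → Fin n) => ∏ s, boolSign (ε s (j s))) N
    (fun j => by simp [sq, ← prod_mul_distrib, boolSign_mul_self, N])
    (fun _ _ => sum_prod_boolSign_mul_prod_boolSign_of_ne) fun j => U fun s => stdBasis n (j s)
  simp_rw [← apply_signVec] at hparseval
  refine le_of_mul_le_mul_left ?_ hN
  calc N * ∑ j : ι → Fin n, U (fun s => stdBasis n (j s)) ^ 2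
      = ∑ ε : ι → Fin n → Bool, U (fun s => signVec n (ε s)) ^ 2 := hparseval.symm
    _ ≤ ∑ _ε : ι → Fin n → Bool, ‖U‖ ^ 2 := by
        refine sum_le_sum fun ε _ => sq_le_sq.mpr ?_
        exact (abs_apply_signVec_le_opNorm U ε).trans (le_abs_self _)
    _ = N * ‖U‖ ^ 2 := by simp [N]

end MultilinearForm

lemma sq_sum_abs_le_card_support_mul_sum_sq {R C : Type*} [Fintype R] [Fintype C]
    (b : R → C → ℝ) (r : R) :
    (∑ c, |b r c|) ^ 2 ≤ #{p : R × C | b p.1 p.2 ≠ 0} * ∑ c, b r c ^ 2 := by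
  have hrow : #{c | b r c ≠ 0} ≤ #{p : R × C | b p.1 p.2 ≠ 0} :=
    card_le_card_of_injOn (r, ·) (fun c hc => by simpa using hc)
      fun _ _ _ _ h => (Prod.mk.inj h).2
  calc (∑ c, |b r c|) ^ 2 = (∑ c ∈ {c | b r c ≠ 0}, |b r c|) ^ 2 := by
        rw [sum_filter_of_ne fun c _ h => abs_ne_zero.mp h]
    _ ≤ #{c | b r c ≠ 0} * ∑ c ∈ {c | b r c ≠ 0}, |b r c| ^ 2 := sq_sum_le_card_mul_sum_sq
    _ ≤ #{p : R × C | b p.1 p.2 ≠ 0} * ∑ c, b r c ^ 2 := by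
        simp_rw [sq_abs]
        gcongr
        exact subset_univ _

lemma sum_sq_sum_abs_le_card_support_mul_sum_sq {R C : Type*} [Fintype R] [Fintype C]
    (b : R → C → ℝ) :
    ∑ r, (∑ c, |b r c|) ^ 2 ≤ #{p : R × C | b p.1 p.2 ≠ 0} * ∑ r, ∑ c, b r c ^ 2 := by
  rw [mul_sum]
  exact sum_le_sum fun r _ => sq_sum_abs_le_card_support_mul_sum_sq b r

/-- If a nonzero `(m+1)`-linear form `U` on `(ℝⁿ)^{m+1}` (sup norms) has exactly `k`
nonzero monomial coefficients and attains the sharp constant `(√2)^m` in the mixed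
`(ℓ₁,ℓ₂)`-Littlewood inequality with exponent `(2,…,2,1)`, then `k ≥ 2^m`. -/
theorem stmt10 (m n k : ℕ)
    (U : ContinuousMultilinearMap ℝ (fun _ : Fin (m + 1) => PiLp ⊤ fun _ : Fin n => ℝ) ℝ)
    (hU : U ≠ 0)
    (hk : (Finset.univ.filter
        (fun j : Fin (m + 1) → Fin n => U (fun s => stdBasis n (j s)) ≠ 0)).card = k)
    (hext : (∑ jr : Fin m → Fin n,
        (∑ jl : Fin n,
          |U (Fin.snoc (fun s => stdBasis n (jr s)) (stdBasis n jl))|) ^ 2) ^ ((1 : ℝ) / 2)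
      = Real.sqrt 2 ^ m * ‖U‖) :
    2 ^ m ≤ k := by
  set a : (Fin (m + 1) → Fin n) → ℝ := fun j => U fun s => stdBasis n (j s)
  have hka : #{j | a j ≠ 0} = k := hk
  let e : (Fin m → Fin n) × Fin n ≃ (Fin (m + 1) → Fin n) :=
    (Equiv.prodComm _ _).trans (Fin.snocEquiv fun _ => Fin n)
  set S := ∑ jr : Fin m → Fin n, (∑ jl : Fin n, |a (Fin.snoc jr jl)|) ^ 2
  have hS : S = 2 ^ m * ‖U‖ ^ 2 := by
    have hsnoc (jr : Fin m → Fin n) (jl : Fin n) :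
        Fin.snoc (fun s => stdBasis n (jr s)) (stdBasis n jl) =
          fun s => stdBasis n ((Fin.snoc jr jl : Fin (m + 1) → Fin n) s) :=
      (Fin.comp_snoc (stdBasis n) jr jl).symm
    have hsqrt : √S = √2 ^ m * ‖U‖ := by
      simp_rw [hsnoc, ← Real.sqrt_eq_rpow] at hext
      exact hext
    calc S = √S ^ 2 := (Real.sq_sqrt (sum_nonneg fun _ _ => sq_nonneg _)).symm
      _ = 2 ^ m * ‖U‖ ^ 2 := by
        rw [hsqrt, mul_pow, ← pow_mul, mul_comm m, pow_mul, Real.sq_sqrt zero_le_two]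
  have hSk : S ≤ k * ‖U‖ ^ 2 :=
    calc S ≤ #{p : (Fin m → Fin n) × Fin n | a (e p) ≠ 0} * ∑ jr, ∑ jl, a (e (jr, jl)) ^ 2 :=
          sum_sq_sum_abs_le_card_support_mul_sum_sq fun jr jl => a (Fin.snoc jr jl)
      _ = k * ∑ j, a j ^ 2 := by
          rw [← hka, card_equiv e (t := {j | a j ≠ 0}) (by simp), ← Fintype.sum_prod_type',
            Fintype.sum_equiv e (fun p => a (e (p.1, p.2)) ^ 2) (fun j => a j ^ 2) fun _ => rfl]
      _ ≤ k * ‖U‖ ^ 2 := by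
          gcongr
          exact sum_sq_apply_stdBasis_le_opNorm_sq U
  have hUpos : 0 < ‖U‖ ^ 2 := pow_pos (norm_pos_iff.mpr hU) 2
  exact_mod_cast le_of_mul_le_mul_right (hS ▸ hSk) hUpos
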